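/- For m ≥ 2 let λ_m be the largest real root of P_m(x) = U_m(x) − U_{m−1}(x) − U_{m−2}(x) (Chebyshev polynomials of the second kind), and let v_0, v_{π/4}, v_{π/2} ∈ ℂ^{2m} be the vectors defined by: v_0(k) = U_{k−1}(λ_m) for 1 ≤ k ≤ m−1, v_0(k) = (1/2)U_{m−1}(λ_m) for k ∈ {m, m+1}, v_0(k) = 0 for m+2 ≤ k ≤ 2m; for η = e^{−iπ/4}, a = 1/(1+η), q = (1−conj(η))/(1+η): v_{π/4}(k) = η^{k−1}U_{k−1}(λ_m) for 1 ≤ k ≤ m−1, v_{π/4}(k) = η^{k−1}·a·U_{m−1}(λ_m) for k ∈ {m, m+1}, v_{π/4}(k) = η^{k−1}·q·U_{2m−k}(λ_m) for m+2 ≤ k ≤ 2m; for β = (1+i)/2: v_{π/2}(k) = (−i)^{k−1}U_{k−1}(λ_m) for 1 ≤ k ≤ m−1, v_{π/2}(k) = (−i)^{k−1}·β·U_{m−1}(λ_m) for k ∈ {m, m+1}, v_{π/2}(k) = (−i)^{k−1}U_{2m−k}(λ_m) for m+2 ≤ k ≤ 2m. Then |⟨v_0, v_{π/4}⟩| / (‖v_0‖·‖v_{π/4}‖)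 > |⟨v_{π/4}, v_{π/2}⟩| / (‖v_{π/4}‖·‖v_{π/2}‖), where ⟨·,·⟩ is the standard Hermitian inner product on ℂ^{2m} and ‖·‖ the associated norm. -/

import Mathlib

open Matrix Complex Polynomial

/-- `H_M(θ) = (1/2)(e^{-iθ} M + e^{iθ} Mᴴ)`. -/
noncomputable def Hmat {ι : Type*} [Fintype ι] [DecidableEq ι]
    (M : Matrix ι ι ℂ) (θ : ℝ) : Matrix ι ι ℂ :=
  (1 / 2 : ℂ) • (Complex.exp (-(θ : ℂ) * Complex.I) • M
    + Complex.exp ((θ : ℂ) * Complex.I) • Mᴴ)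

/-- The matrix `C_{2m}(1,1)` (0-based indices: superdiagonal `1`,
entry `(m-2, m)` equal to `1`, entry `(m-1, m+1)` equal to `-1`). -/
noncomputable def C2m (m : ℕ) : Matrix (Fin (2 * m)) (Fin (2 * m)) ℂ :=
  fun i i' =>
    (if (i' : ℕ) = (i : ℕ) + 1 then 1 else 0)
    + (if (i : ℕ) = m - 2 ∧ (i' : ℕ) = m then 1 else 0)
    - (if (i : ℕ) = m - 1 ∧ (i' : ℕ) = m + 1 then 1 else 0)

/-- `U_j(x)` for the Chebyshev polynomials of the second kind, over `ℝ`. -/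
noncomputable def ur (j : ℤ) (x : ℝ) : ℝ := (Polynomial.Chebyshev.U ℝ j).eval x

/-- The vector `v₀` (0-based coordinate `i` corresponds to `k = i + 1`). -/
noncomputable def v0 (m : ℕ) (lam : ℝ) : Fin (2 * m) → ℂ := fun i =>
  if (i : ℕ) < m - 1 then ((ur (i : ℕ) lam : ℝ) : ℂ)
  else if (i : ℕ) ≤ m then ((1 / 2 * ur ((m : ℤ) - 1) lam : ℝ) : ℂ)
  else 0

/-- The vector `v_{π/4}`. -/
noncomputable def vq (m : ℕ) (lam : ℝ) : Fin (2 * m) → ℂ := fun i =>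
  (Complex.exp (-(Real.pi / 4 : ℝ) * Complex.I)) ^ (i : ℕ) *
    (if (i : ℕ) < m - 1 then ((ur (i : ℕ) lam : ℝ) : ℂ)
     else if (i : ℕ) ≤ m then
       (1 / (1 + Complex.exp (-(Real.pi / 4 : ℝ) * Complex.I))) *
         ((ur ((m : ℤ) - 1) lam : ℝ) : ℂ)
     else ((1 - starRingEnd ℂ (Complex.exp (-(Real.pi / 4 : ℝ) * Complex.I))) /
         (1 + Complex.exp (-(Real.pi / 4 : ℝ) * Complex.I))) *
       ((ur (2 * (m : ℤ) - 1 - (i : ℕ)) lam : ℝ) : ℂ))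

/-- The vector `v_{π/2}`. -/
noncomputable def vh (m : ℕ) (lam : ℝ) : Fin (2 * m) → ℂ := fun i =>
  (-Complex.I) ^ (i : ℕ) *
    (if (i : ℕ) < m - 1 then ((ur (i : ℕ) lam : ℝ) : ℂ)
     else if (i : ℕ) ≤ m then ((1 + Complex.I) / 2) * ((ur ((m : ℤ) - 1) lam : ℝ) : ℂ)
     else ((ur (2 * (m : ℤ) - 1 - (i : ℕ)) lam : ℝ) : ℂ))


/-- The standard Hermitian inner product `⟨u, v⟩ = ∑ₖ u(k) conj(v(k))` on `ℂ^{2m}`. -/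
noncomputable def ip {ι : Type*} [Fintype ι] (u v : ι → ℂ) : ℂ :=
  ∑ k, u k * (starRingEnd ℂ) (v k)

/-- The associated norm. -/
noncomputable def nrm {ι : Type*} [Fintype ι] (u : ι → ℂ) : ℝ :=
  Real.sqrt (ip u u).re

open Finset

noncomputable def cc : ℝ := Real.sqrt 2 / 2
noncomputable def om : ℂ := (cc : ℝ) + (cc : ℝ) * Complex.I

lemma cc_sq : cc ^ 2 = 1 / 2 := by
  have : Real.sqrt 2 ^ 2 = 2 := Real.sq_sqrt (by norm_num)
  simp only [cc]; nlinarith [this]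

lemma cc_pos : 0 < cc := by
  have := Real.sqrt_pos.mpr (show (0:ℝ) < 2 by norm_num)
  simp only [cc]; linarith

lemma cc_half : 1 / 2 < cc := by
  nlinarith [cc_sq, cc_pos]

lemma cc_lt_one : cc < 1 := by nlinarith [cc_sq, cc_pos]

lemma omc_sq : ((cc : ℝ) : ℂ) ^ 2 = 1 / 2 := by
  rw [← Complex.ofReal_pow, cc_sq]; norm_num

lemma om_sq : om ^ 2 = Complex.I := by
  have h : om ^ 2 = 2 * ((cc:ℝ):ℂ)^2 * Complex.I := by
    simp only [om]; ring_nf; rw [Complex.I_sq]; ring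
  rw [h, omc_sq]; ring

lemma om_four : om ^ 4 = -1 := by
  have : om ^ 4 = (om ^ 2) ^ 2 := by ring
  rw [this, om_sq, Complex.I_sq]

lemma om_eight : om ^ 8 = 1 := by
  have : om ^ 8 = (om ^ 4) ^ 2 := by ring
  rw [this, om_four]; ring

lemma conj_om : (starRingEnd ℂ) om = (cc : ℝ) - (cc : ℝ) * Complex.I := by
  simp [om, Complex.ext_iff]

lemma om_mul_conj : om * (starRingEnd ℂ) om = 1 := by
  rw [conj_om]
  have : om * ((cc:ℝ) - (cc:ℝ)*Complex.I) = ((cc:ℝ):ℂ)^2 * 2 := by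
    simp only [om]; ring_nf; rw [Complex.I_sq]; ring
  rw [this, omc_sq]; ring

lemma conj_mul_om : (starRingEnd ℂ) om * om = 1 := by
  rw [mul_comm]; exact om_mul_conj

lemma om_ne_zero : om ≠ 0 := by
  intro h; have := om_mul_conj; rw [h] at this; simp at this

lemma eta_eq : Complex.exp (-(Real.pi / 4 : ℝ) * Complex.I) = (starRingEnd ℂ) om := by
  rw [conj_om]
  have : (-(Real.pi / 4 : ℝ) : ℂ) = ((-(Real.pi/4) : ℝ) : ℂ) := by push_cast; ring
  rw [this, Complex.exp_mul_I, ← Complex.ofReal_cos, ← Complex.ofReal_sin]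
  rw [Real.cos_neg, Real.sin_neg, Real.cos_pi_div_four, Real.sin_pi_div_four]
  push_cast [cc]; ring

lemma ur_rec (j : ℤ) (x : ℝ) : ur (j + 2) x = 2 * x * ur (j + 1) x - ur j x := by
  simp [ur, Polynomial.Chebyshev.U_add_two]

lemma ur_zero (x : ℝ) : ur 0 x = 1 := by simp [ur]

lemma ur_one (x : ℝ) : ur 1 x = 2 * x := by simp [ur, Polynomial.Chebyshev.U_one]

lemma ur_step {x : ℝ} (hx : 1 ≤ x) :
    ∀ j : ℕ, 1 ≤ ur j x ∧ ur j x + 1 ≤ ur (j + 1 : ℕ) x := by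
  intro j
  induction j with
  | zero =>
    constructor
    · simp [ur_zero]
    · have : ((0 + 1 : ℕ) : ℤ) = 1 := by norm_num
      rw [this, ur_one]; simp [ur_zero]; linarith
  | succ n ih =>
    obtain ⟨h1, h2⟩ := ih
    constructor
    · linarith
    · have hr : ur ((n:ℤ) + 2) x = 2 * x * ur ((n:ℤ) + 1) x - ur n x := ur_rec n x
      have e1 : ((n + 1 : ℕ) : ℤ) = (n : ℤ) + 1 := by push_cast; ring
      have e2 : ((n + 2 : ℕ) : ℤ) = (n : ℤ) + 2 := by push_cast; ring
      rw [show (n + 1 + 1 : ℕ) = n + 2 by omega, e1, e2, hr, ← e1]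
      nlinarith [h1, h2]

lemma ur_ge_one {x : ℝ} (hx : 1 ≤ x) (j : ℕ) : 1 ≤ ur j x := (ur_step hx j).1

lemma ur_succ_ge {x : ℝ} (hx : 1 ≤ x) (j : ℕ) : ur j x + 1 ≤ ur (j + 1 : ℕ) x :=
  (ur_step hx j).2

lemma ur_mono {x : ℝ} (hx : 1 ≤ x) {i j : ℕ} (hij : i ≤ j) : ur i x ≤ ur j x := by
  induction j with
  | zero =>
    have : i = 0 := by omega
    subst this; rfl
  | succ n ih =>
    rcases Nat.lt_or_ge i (n+1) with h | h
    · have h1 := ih (by omega : i ≤ n)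
      have h2 := ur_succ_ge hx n
      linarith
    · have : i = n + 1 := by omega
      subst this; rfl

lemma ur_at_one : ∀ j : ℕ, ur j 1 = j + 1 := by
  intro j
  induction j using Nat.strong_induction_on with
  | _ j ih =>
    match j with
    | 0 => simp [ur_zero]
    | 1 => rw [show ((1:ℕ):ℤ) = 1 by norm_num, ur_one]; norm_num
    | (n+2) =>
      have e2 : ((n + 2 : ℕ) : ℤ) = (n : ℤ) + 2 := by push_cast; ring
      rw [e2, ur_rec]
      have h1 := ih (n+1) (by omega)
      have h0 := ih n (by omega)
      rw [show ((n:ℤ)+1) = ((n+1 : ℕ) : ℤ) by push_cast; ring, h1, h0]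
      push_cast; ring

lemma ur_cont (j : ℤ) : Continuous (fun x : ℝ => ur j x) := by
  simpa [ur] using (Polynomial.Chebyshev.U ℝ j).continuous

-- lam ≥ 1
lemma lam_ge_one (m : ℕ) (hm : 2 ≤ m) (lam : ℝ)
    (hroot : ur (m : ℤ) lam - ur ((m : ℤ) - 1) lam - ur ((m : ℤ) - 2) lam = 0)
    (hmax : ∀ x : ℝ,
        ur (m : ℤ) x - ur ((m : ℤ) - 1) x - ur ((m : ℤ) - 2) x = 0 → x ≤ lam) :
    1 ≤ lam := by
  set f : ℝ → ℝ := fun x => ur (m : ℤ) x - ur ((m : ℤ) - 1) x - ur ((m : ℤ) - 2) x with hf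
  have hcont : ContinuousOn f (Set.Icc (1:ℝ) (3/2)) :=
    (((ur_cont m).sub (ur_cont _)).sub (ur_cont _)).continuousOn
  have e1 : ((m:ℤ) - 1) = ((m - 1 : ℕ) : ℤ) := by omega
  have e2 : ((m:ℤ) - 2) = ((m - 2 : ℕ) : ℤ) := by omega
  have hf1 : f 1 ≤ 0 := by
    simp only [hf, e1, e2, ur_at_one]
    have : (m:ℝ) ≥ 2 := by exact_mod_cast hm
    push_cast [Nat.cast_sub (by omega : 1 ≤ m), Nat.cast_sub hm]
    linarith
  have hf32 : 0 ≤ f (3/2) := by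
    have hx : (1:ℝ) ≤ 3/2 := by norm_num
    have hrec : ur (m : ℤ) (3/2) = 2 * (3/2) * ur ((m:ℤ) - 1) (3/2) - ur ((m:ℤ) - 2) (3/2) := by
      have := ur_rec ((m:ℤ) - 2) (3/2)
      rw [show (m:ℤ) - 2 + 2 = (m:ℤ) by ring, show (m:ℤ) - 2 + 1 = (m:ℤ) - 1 by ring] at this
      exact this
    have hmono : ur ((m:ℤ) - 2) (3/2) ≤ ur ((m:ℤ) - 1) (3/2) := by
      rw [e1, e2]; exact ur_mono hx (by omega)
    have hpos : 1 ≤ ur ((m:ℤ) - 1) (3/2) := by rw [e1]; exact ur_ge_one hx _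
    simp only [hf]; rw [hrec]; linarith
  obtain ⟨x, hx, hfx⟩ := intermediate_value_Icc (by norm_num : (1:ℝ) ≤ 3/2) hcont
    (Set.mem_Icc.mpr ⟨hf1, hf32⟩)
  exact le_trans hx.1 (hmax x hfx)

-- Abel summation by parts
lemma abel_sum (s a : ℕ → ℝ) (N : ℕ) :
    ∑ j ∈ range N, s (j + 1) * a j
      = (∑ j ∈ range N, (∑ r ∈ range (j + 1), s (r + 1)) * (a j - a (j + 1)))
        + (∑ r ∈ range N, s (r + 1)) * a N := by
  induction N with
  | zero => simp
  | succ n ih =>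
    rw [sum_range_succ, ih, sum_range_succ (fun j => (∑ r ∈ range (j + 1), s (r + 1)) * (a j - a (j + 1))),
      sum_range_succ (fun r => s (r + 1))]
    ring

lemma sum_eight : ∑ r ∈ range 8, om ^ (r + 1) = 0 := by
  simp only [Finset.sum_range_succ, Finset.sum_range_zero]
  linear_combination (om + om^2 + om^3 + om^4) * om_four

lemma PS_period (R : ℕ) : ∑ r ∈ range (R + 8), om ^ (r + 1) = ∑ r ∈ range R, om ^ (r + 1) := by
  rw [Finset.sum_range_add]
  have : ∑ i ∈ range 8, om ^ (R + i + 1) = om ^ R * ∑ r ∈ range 8, om ^ (r + 1) := by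
    rw [Finset.mul_sum]
    apply Finset.sum_congr rfl
    intro i _; rw [← pow_add]; ring_nf
  rw [this, sum_eight]; ring

lemma Ps_nonneg : ∀ R : ℕ, 0 ≤ (∑ r ∈ range R, om ^ (r + 1)).im := by
  intro R
  induction R using Nat.strong_induction_on with
  | _ R ih =>
    rcases Nat.lt_or_ge R 8 with h | h
    · have h2 := om_sq
      have h3 : om ^ 3 = Complex.I * om := by rw [show om^3 = om^2 * om by ring, h2]
      have h4 := om_four
      have h5 : om ^ 5 = -om := by rw [show om^5 = om^4 * om by ring, h4]; ring
      have h6 : om ^ 6 = -Complex.I := by rw [show om^6 = om^4 * om^2 by ring, h4, h2]; ring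
      have h7 : om ^ 7 = -(Complex.I * om) := by rw [show om^7 = om^4 * om^3 by ring, h4, h3]; ring
      interval_cases R <;>
        simp only [Finset.sum_range_succ, Finset.sum_range_zero, pow_one, h2, h3, h5, h6, h7, h4] <;>
        simp [om, Complex.add_im, Complex.mul_im] <;>
        nlinarith [cc_pos, cc_sq]
    · obtain ⟨k, rfl⟩ : ∃ k, R = k + 8 := ⟨R - 8, by omega⟩
      rw [PS_period]
      exact ih k (by omega)

lemma Ps_one : (∑ r ∈ range 1, om ^ (r + 1)).im = cc := by
  simp [om]

-- ℕ-indexed bodies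
noncomputable def V0 (m : ℕ) (lam : ℝ) (i : ℕ) : ℂ :=
  if i < m - 1 then ((ur (i : ℕ) lam : ℝ) : ℂ)
  else if i ≤ m then ((1 / 2 * ur ((m : ℤ) - 1) lam : ℝ) : ℂ)
  else 0

noncomputable def VQ (m : ℕ) (lam : ℝ) (i : ℕ) : ℂ :=
  (Complex.exp (-(Real.pi / 4 : ℝ) * Complex.I)) ^ i *
    (if i < m - 1 then ((ur (i : ℕ) lam : ℝ) : ℂ)
     else if i ≤ m then
       (1 / (1 + Complex.exp (-(Real.pi / 4 : ℝ) * Complex.I))) *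
         ((ur ((m : ℤ) - 1) lam : ℝ) : ℂ)
     else ((1 - starRingEnd ℂ (Complex.exp (-(Real.pi / 4 : ℝ) * Complex.I))) /
         (1 + Complex.exp (-(Real.pi / 4 : ℝ) * Complex.I))) *
       ((ur (2 * (m : ℤ) - 1 - (i : ℕ)) lam : ℝ) : ℂ))

noncomputable def VH (m : ℕ) (lam : ℝ) (i : ℕ) : ℂ :=
  (-Complex.I) ^ i *
    (if i < m - 1 then ((ur (i : ℕ) lam : ℝ) : ℂ)
     else if i ≤ m then ((1 + Complex.I) / 2) * ((ur ((m : ℤ) - 1) lam : ℝ) : ℂ)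
     else ((ur (2 * (m : ℤ) - 1 - (i : ℕ)) lam : ℝ) : ℂ))

lemma ip_v0_vq (m : ℕ) (lam : ℝ) :
    ip (v0 m lam) (vq m lam)
      = ∑ i ∈ range (2 * m), V0 m lam i * (starRingEnd ℂ) (VQ m lam i) :=
  Fin.sum_univ_eq_sum_range (fun i => V0 m lam i * (starRingEnd ℂ) (VQ m lam i)) (2 * m)

lemma ip_vq_vh (m : ℕ) (lam : ℝ) :
    ip (vq m lam) (vh m lam)
      = ∑ i ∈ range (2 * m), VQ m lam i * (starRingEnd ℂ) (VH m lam i) :=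
  Fin.sum_univ_eq_sum_range (fun i => VQ m lam i * (starRingEnd ℂ) (VH m lam i)) (2 * m)

lemma ip_v0_v0 (m : ℕ) (lam : ℝ) :
    ip (v0 m lam) (v0 m lam)
      = ∑ i ∈ range (2 * m), V0 m lam i * (starRingEnd ℂ) (V0 m lam i) :=
  Fin.sum_univ_eq_sum_range (fun i => V0 m lam i * (starRingEnd ℂ) (V0 m lam i)) (2 * m)

lemma ip_vq_vq (m : ℕ) (lam : ℝ) :
    ip (vq m lam) (vq m lam)
      = ∑ i ∈ range (2 * m), VQ m lam i * (starRingEnd ℂ) (VQ m lam i) :=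
  Fin.sum_univ_eq_sum_range (fun i => VQ m lam i * (starRingEnd ℂ) (VQ m lam i)) (2 * m)

lemma ip_vh_vh (m : ℕ) (lam : ℝ) :
    ip (vh m lam) (vh m lam)
      = ∑ i ∈ range (2 * m), VH m lam i * (starRingEnd ℂ) (VH m lam i) :=
  Fin.sum_univ_eq_sum_range (fun i => VH m lam i * (starRingEnd ℂ) (VH m lam i)) (2 * m)

section regions
variable (m : ℕ) (lam : ℝ)

lemma conj_eta : (starRingEnd ℂ) (Complex.exp (-(Real.pi / 4 : ℝ) * Complex.I)) = om := by
  rw [eta_eq, Complex.conj_conj]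

lemma eta_mul_I : Complex.exp (-(Real.pi / 4 : ℝ) * Complex.I) * Complex.I = om := by
  rw [eta_eq]
  have h := congrArg (· * Complex.I) (Complex.ext_iff.mpr ⟨rfl, rfl⟩ :
    (starRingEnd ℂ) om = (starRingEnd ℂ) om)
  simp only [om, _root_.map_add, _root_.map_mul, Complex.conj_ofReal, Complex.conj_I]
  ring_nf
  rw [Complex.I_sq]
  ring

lemma one_add_om_ne : (1 : ℂ) + om ≠ 0 := by
  intro h
  have := congrArg Complex.re h
  simp [om] at this
  nlinarith [cc_pos]

lemma one_add_conj_om_ne : (1 : ℂ) + (starRingEnd ℂ) om ≠ 0 := by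
  intro h
  have := congrArg Complex.re h
  simp [om] at this
  nlinarith [cc_pos]

lemma V0_lt {i : ℕ} (h : i < m - 1) : V0 m lam i = ((ur i lam : ℝ) : ℂ) := by
  simp [V0, h]

lemma V0_mid {i : ℕ} (h1 : ¬ i < m - 1) (h2 : i ≤ m) (hm : 2 ≤ m) :
    V0 m lam i = ((ur ((m - 1 : ℕ) : ℤ) lam : ℝ) : ℂ) / 2 := by
  have e : ((m : ℤ) - 1) = ((m - 1 : ℕ) : ℤ) := by omega
  simp only [V0, if_neg h1, if_pos h2, e]
  push_cast; ring

lemma V0_tail {i : ℕ} (h1 : ¬ i < m - 1) (h2 : ¬ i ≤ m) : V0 m lam i = 0 := by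
  simp [V0, h1, h2]

lemma VQ_lt {i : ℕ} (h : i < m - 1) :
    VQ m lam i = (Complex.exp (-(Real.pi / 4 : ℝ) * Complex.I)) ^ i * ((ur i lam : ℝ) : ℂ) := by
  simp [VQ, h]

lemma VQ_mid {i : ℕ} (h1 : ¬ i < m - 1) (h2 : i ≤ m) (hm : 2 ≤ m) :
    VQ m lam i = (Complex.exp (-(Real.pi / 4 : ℝ) * Complex.I)) ^ i *
      ((1 / (1 + Complex.exp (-(Real.pi / 4 : ℝ) * Complex.I))) *
        ((ur ((m - 1 : ℕ) : ℤ) lam : ℝ) : ℂ)) := by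
  have e : ((m : ℤ) - 1) = ((m - 1 : ℕ) : ℤ) := by omega
  simp only [VQ, if_neg h1, if_pos h2, e]

lemma VQ_tail {j : ℕ} (hj : j < m - 1) (hm : 2 ≤ m) :
    VQ m lam (m + 1 + j) = (Complex.exp (-(Real.pi / 4 : ℝ) * Complex.I)) ^ (m + 1 + j) *
      (((1 - starRingEnd ℂ (Complex.exp (-(Real.pi / 4 : ℝ) * Complex.I))) /
         (1 + Complex.exp (-(Real.pi / 4 : ℝ) * Complex.I))) *
        ((ur ((m - 2 - j : ℕ) : ℤ) lam : ℝ) : ℂ)) := by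
  have e : (2 * (m : ℤ) - 1 - ((m + 1 + j : ℕ) : ℤ)) = ((m - 2 - j : ℕ) : ℤ) := by
    push_cast; omega
  simp only [VQ, if_neg (by omega : ¬ m + 1 + j < m - 1), if_neg (by omega : ¬ m + 1 + j ≤ m)]
  push_cast at e ⊢
  rw [e]

lemma VH_lt {i : ℕ} (h : i < m - 1) :
    VH m lam i = (-Complex.I) ^ i * ((ur i lam : ℝ) : ℂ) := by
  simp [VH, h]

lemma VH_mid {i : ℕ} (h1 : ¬ i < m - 1) (h2 : i ≤ m) (hm : 2 ≤ m) :
    VH m lam i = (-Complex.I) ^ i *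
      (((1 + Complex.I) / 2) * ((ur ((m - 1 : ℕ) : ℤ) lam : ℝ) : ℂ)) := by
  have e : ((m : ℤ) - 1) = ((m - 1 : ℕ) : ℤ) := by omega
  simp only [VH, if_neg h1, if_pos h2, e]

lemma VH_tail {j : ℕ} (hj : j < m - 1) (hm : 2 ≤ m) :
    VH m lam (m + 1 + j) = (-Complex.I) ^ (m + 1 + j) *
      ((ur ((m - 2 - j : ℕ) : ℤ) lam : ℝ) : ℂ) := by
  have e : (2 * (m : ℤ) - 1 - ((m + 1 + j : ℕ) : ℤ)) = ((m - 2 - j : ℕ) : ℤ) := by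
    push_cast; omega
  simp only [VH, if_neg (by omega : ¬ m + 1 + j < m - 1), if_neg (by omega : ¬ m + 1 + j ≤ m)]
  push_cast at e ⊢
  rw [e]

end regions

lemma sum_split (m : ℕ) (hm : 2 ≤ m) (f : ℕ → ℂ) :
    ∑ i ∈ range (2 * m), f i
      = (∑ i ∈ range (m - 1), f i) + f (m - 1) + f m + ∑ j ∈ range (m - 1), f (m + 1 + j) := by
  have h1 : ∑ i ∈ Ico 0 (m - 1), f i + ∑ i ∈ Ico (m - 1) (m + 1), f i
      = ∑ i ∈ Ico 0 (m + 1), f i := sum_Ico_consecutive f (by omega) (by omega)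
  have h2 : ∑ i ∈ Ico 0 (m + 1), f i + ∑ i ∈ Ico (m + 1) (2 * m), f i
      = ∑ i ∈ Ico 0 (2 * m), f i := sum_Ico_consecutive f (by omega) (by omega)
  have h3 : ∑ i ∈ Ico (m - 1) (m + 1), f i = f (m - 1) + f m := by
    rw [sum_Ico_eq_sum_range, show m + 1 - (m - 1) = 2 by omega]
    rw [show (2:ℕ) = 1 + 1 from rfl, Finset.sum_range_succ, Finset.sum_range_succ]
    rw [show m - 1 + 0 = m - 1 by omega, show m - 1 + 1 = m by omega]
    simp
  have h4 : ∑ i ∈ Ico (m + 1) (2 * m), f i = ∑ j ∈ range (m - 1), f (m + 1 + j) := by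
    rw [sum_Ico_eq_sum_range, show 2 * m - (m + 1) = m - 1 by omega]
  rw [range_eq_Ico, ← h2, ← h1, h3, h4, ← range_eq_Ico]
  ring

noncomputable def Zc (m : ℕ) (lam : ℝ) : ℂ :=
  ∑ j ∈ range (m - 1), om ^ j * ((ur j lam : ℝ) : ℂ) ^ 2

lemma conj_om_pow (k : ℕ) : (starRingEnd ℂ) (om ^ k) * om ^ k = 1 := by
  rw [_root_.map_pow, ← mul_pow, mul_comm, om_mul_conj, one_pow]

lemma scalar_ext (z w : ℂ) (h1 : z.re = w.re) (h2 : z.im = w.im) : z = w :=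
  Complex.ext h1 h2

lemma hBmid_scalar : (1 + om) * (1 - Complex.I) = 2 * (cc : ℝ) * (1 + (starRingEnd ℂ) om) := by
  apply scalar_ext <;> simp [om, Complex.ext_iff, Complex.add_re, Complex.add_im,
    Complex.mul_re, Complex.mul_im, Complex.conj_ofReal] <;> nlinarith [cc_sq]

lemma hq0_scalar : (1 - om) * om = (2 * (cc : ℝ) - 1) * (1 + (starRingEnd ℂ) om) := by
  apply scalar_ext <;> simp [om, Complex.ext_iff, Complex.add_re, Complex.add_im,
    Complex.mul_re, Complex.mul_im, Complex.conj_ofReal, Complex.sub_re, Complex.sub_im] <;>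
    nlinarith [cc_sq]

theorem compute_A (m : ℕ) (hm : 2 ≤ m) (lam : ℝ) :
    ip (v0 m lam) (vq m lam)
      = Zc m lam + ((ur ((m - 1 : ℕ) : ℤ) lam : ℝ) : ℂ) ^ 2 / 2 * om ^ (m - 1) := by
  rw [ip_v0_vq, sum_split m hm]
  have hr1 : ∀ i ∈ range (m - 1),
      V0 m lam i * (starRingEnd ℂ) (VQ m lam i) = om ^ i * ((ur i lam : ℝ) : ℂ) ^ 2 := by
    intro i hi
    rw [mem_range] at hi
    rw [V0_lt m lam hi, VQ_lt m lam hi, _root_.map_mul, _root_.map_pow, conj_eta, Complex.conj_ofReal]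
    ring
  have hmid : ∀ i, ¬ i < m - 1 → i ≤ m →
      V0 m lam i * (starRingEnd ℂ) (VQ m lam i)
        = om ^ i / (1 + om) * (((ur ((m - 1 : ℕ) : ℤ) lam : ℝ) : ℂ) ^ 2 / 2) := by
    intro i h1 h2
    rw [V0_mid m lam h1 h2 hm, VQ_mid m lam h1 h2 hm, _root_.map_mul, _root_.map_pow, conj_eta, _root_.map_mul,
      Complex.conj_ofReal, _root_.map_div₀, _root_.map_one, _root_.map_add, _root_.map_one, conj_eta]
    ring
  have htail : ∀ j ∈ range (m - 1),
      V0 m lam (m + 1 + j) * (starRingEnd ℂ) (VQ m lam (m + 1 + j)) = 0 := by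
    intro j hj
    rw [V0_tail m lam (by omega) (by omega)]
    ring
  rw [Finset.sum_congr rfl hr1, Finset.sum_congr rfl htail,
    hmid (m - 1) (by omega) (by omega), hmid m (by omega) (by omega)]
  rw [show om ^ m = om ^ (m - 1) * om from by rw [← pow_succ, show m - 1 + 1 = m by omega]]
  rw [Zc]
  field_simp [one_add_om_ne]
  simp only [Finset.sum_const_zero, mul_zero, add_zero]
  ring

theorem compute_B (m : ℕ) (hm : 2 ≤ m) (lam : ℝ) :
    ip (vq m lam) (vh m lam)
      = Zc m lam + (cc : ℝ) * ((ur ((m - 1 : ℕ) : ℤ) lam : ℝ) : ℂ) ^ 2 * om ^ (m - 1)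
        + (2 * (cc : ℝ) - 1) * om ^ (2 * m - 2) * (starRingEnd ℂ) (Zc m lam) := by
  rw [ip_vq_vh, sum_split m hm]
  have hr1 : ∀ i ∈ range (m - 1),
      VQ m lam i * (starRingEnd ℂ) (VH m lam i) = om ^ i * ((ur i lam : ℝ) : ℂ) ^ 2 := by
    intro i hi
    rw [mem_range] at hi
    rw [VQ_lt m lam hi, VH_lt m lam hi, _root_.map_mul, _root_.map_pow, _root_.map_neg, Complex.conj_I,
      Complex.conj_ofReal, neg_neg]
    have hpow : (Complex.exp (-(Real.pi / 4 : ℝ) * Complex.I)) ^ i * Complex.I ^ i = om ^ i := by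
      rw [← mul_pow, eta_mul_I]
    rw [← hpow]
    ring
  have hcoef : (1 + om) * (1 - Complex.I) / (2 * (1 + (starRingEnd ℂ) om)) = ((cc : ℝ) : ℂ) := by
    rw [hBmid_scalar]
    field_simp [one_add_conj_om_ne]
  have hmid : ∀ i, ¬ i < m - 1 → i ≤ m →
      VQ m lam i * (starRingEnd ℂ) (VH m lam i)
        = om ^ i * ((cc : ℝ) : ℂ) * ((ur ((m - 1 : ℕ) : ℤ) lam : ℝ) : ℂ) ^ 2 / (1 + om) := by
    intro i h1 h2
    rw [VQ_mid m lam h1 h2 hm, VH_mid m lam h1 h2 hm]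
    simp only [_root_.map_mul, _root_.map_pow, _root_.map_neg, Complex.conj_I, _root_.map_div₀, _root_.map_add, _root_.map_one,
      Complex.conj_ofReal, _root_.map_ofNat, neg_neg]
    rw [← hcoef]
    have hpow : (Complex.exp (-(Real.pi / 4 : ℝ) * Complex.I)) ^ i * Complex.I ^ i = om ^ i := by
      rw [← mul_pow, eta_mul_I]
    rw [← hpow, eta_eq]
    field_simp [one_add_om_ne, one_add_conj_om_ne]
    ring
  have htail : ∀ j ∈ range (m - 1),
      VQ m lam (m + 1 + j) * (starRingEnd ℂ) (VH m lam (m + 1 + j))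
        = ((1 - om) / (1 + (starRingEnd ℂ) om))
            * (om ^ (m + 1 + j) * ((ur ((m - 2 - j : ℕ) : ℤ) lam : ℝ) : ℂ) ^ 2) := by
    intro j hj
    rw [mem_range] at hj
    rw [VQ_tail m lam hj hm, VH_tail m lam hj hm]
    simp only [_root_.map_mul, _root_.map_pow, _root_.map_neg, Complex.conj_I, Complex.conj_ofReal, neg_neg]
    have hpow : (Complex.exp (-(Real.pi / 4 : ℝ) * Complex.I)) ^ (m + 1 + j)
        * Complex.I ^ (m + 1 + j) = om ^ (m + 1 + j) := by
      rw [← mul_pow, eta_mul_I]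
    rw [← hpow, eta_eq]
    simp only [Complex.conj_conj]
    ring
  rw [Finset.sum_congr rfl hr1, Finset.sum_congr rfl htail,
    hmid (m - 1) (by omega) (by omega), hmid m (by omega) (by omega)]
  rw [← Finset.mul_sum]
  have hrefl : ∑ j ∈ range (m - 1),
        om ^ (m + 1 + j) * ((ur ((m - 2 - j : ℕ) : ℤ) lam : ℝ) : ℂ) ^ 2
      = om ^ (2 * m - 1) * (starRingEnd ℂ) (Zc m lam) := by
    rw [← Finset.sum_range_reflect
      (fun j => om ^ (m + 1 + j) * ((ur ((m - 2 - j : ℕ) : ℤ) lam : ℝ) : ℂ) ^ 2) (m - 1)]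
    have hZ : (starRingEnd ℂ) (Zc m lam)
        = ∑ j ∈ range (m - 1), (starRingEnd ℂ) (om ^ j) * ((ur j lam : ℝ) : ℂ) ^ 2 := by
      rw [Zc, _root_.map_sum]
      apply Finset.sum_congr rfl
      intro j _
      simp [_root_.map_mul, _root_.map_pow, Complex.conj_ofReal, ← Complex.ofReal_pow]
    rw [hZ, Finset.mul_sum]
    apply Finset.sum_congr rfl
    intro j hj
    rw [mem_range] at hj
    rw [show m + 1 + (m - 1 - 1 - j) = 2 * m - 1 - j by omega,
      show m - 2 - (m - 1 - 1 - j) = j by omega]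
    have hsplit : om ^ (2 * m - 1 - j) = om ^ (2 * m - 1) * (starRingEnd ℂ) (om ^ j) := by
      calc om ^ (2 * m - 1 - j)
          = om ^ (2 * m - 1 - j) * ((starRingEnd ℂ) (om ^ j) * om ^ j) := by
            rw [conj_om_pow]; ring
        _ = om ^ (2 * m - 1 - j) * om ^ j * (starRingEnd ℂ) (om ^ j) := by ring
        _ = om ^ (2 * m - 1) * (starRingEnd ℂ) (om ^ j) := by
            rw [← pow_add, show 2 * m - 1 - j + j = 2 * m - 1 by omega]
    rw [hsplit]
    ring
  rw [hrefl]
  have hc2 : (1 - om) / (1 + (starRingEnd ℂ) om) * (om ^ (2 * m - 1) * (starRingEnd ℂ) (Zc m lam))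
      = (2 * (cc : ℝ) - 1) * om ^ (2 * m - 2) * (starRingEnd ℂ) (Zc m lam) := by
    rw [show om ^ (2 * m - 1) = om ^ (2 * m - 2) * om from by
      rw [← pow_succ, show 2 * m - 2 + 1 = 2 * m - 1 by omega]]
    have : (1 - om) / (1 + (starRingEnd ℂ) om) * om = 2 * ((cc : ℝ) : ℂ) - 1 := by
      rw [div_mul_eq_mul_div, hq0_scalar, mul_div_assoc,
        div_self (one_add_conj_om_ne), mul_one]
    calc (1 - om) / (1 + (starRingEnd ℂ) om) * (om ^ (2 * m - 2) * om * (starRingEnd ℂ) (Zc m lam))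
        = ((1 - om) / (1 + (starRingEnd ℂ) om) * om) * om ^ (2 * m - 2)
            * (starRingEnd ℂ) (Zc m lam) := by ring
      _ = _ := by rw [this]
  rw [hc2]
  rw [show om ^ m = om ^ (m - 1) * om from by rw [← pow_succ, show m - 1 + 1 = m by omega]]
  simp only [Zc]
  field_simp [one_add_om_ne]
  ring

lemma hsum_scalar : (1 + (starRingEnd ℂ) om) * (1 + om) = ((2 + 2 * cc : ℝ) : ℂ) := by
  apply scalar_ext <;> simp [om, Complex.ext_iff, Complex.add_re, Complex.add_im,
    Complex.mul_re, Complex.mul_im, Complex.conj_ofReal] <;> nlinarith [cc_sq]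

lemma hq2_scalar : (1 - om) * (1 - (starRingEnd ℂ) om) = ((2 - 2 * cc : ℝ) : ℂ) := by
  apply scalar_ext <;> simp [om, Complex.ext_iff, Complex.add_re, Complex.add_im,
    Complex.mul_re, Complex.mul_im, Complex.conj_ofReal, Complex.sub_re, Complex.sub_im] <;>
    nlinarith [cc_sq]

lemma two_add_two_cc_ne : ((2 + 2 * cc : ℝ) : ℂ) ≠ 0 := by
  rw [ne_eq, Complex.ofReal_eq_zero]
  nlinarith [cc_pos]

lemma refl_sum (m : ℕ) (lam : ℝ) :
    ∑ j ∈ range (m - 1), ((ur ((m - 2 - j : ℕ) : ℤ) lam : ℝ) : ℂ) ^ 2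
      = ∑ j ∈ range (m - 1), ((ur (j : ℕ) lam : ℝ) : ℂ) ^ 2 := by
  rw [← Finset.sum_range_reflect (fun j => ((ur ((m - 2 - j : ℕ) : ℤ) lam : ℝ) : ℂ) ^ 2) (m - 1)]
  apply Finset.sum_congr rfl
  intro j hj
  rw [mem_range] at hj
  rw [show m - 2 - (m - 1 - 1 - j) = j by omega]

theorem compute_N0 (m : ℕ) (hm : 2 ≤ m) (lam : ℝ) :
    ip (v0 m lam) (v0 m lam)
      = (((∑ j ∈ range (m - 1), ur (j : ℕ) lam ^ 2)
          + ur ((m - 1 : ℕ) : ℤ) lam ^ 2 / 2 : ℝ) : ℂ) := by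
  rw [ip_v0_v0, sum_split m hm]
  have hr1 : ∀ i ∈ range (m - 1),
      V0 m lam i * (starRingEnd ℂ) (V0 m lam i) = ((ur i lam ^ 2 : ℝ) : ℂ) := by
    intro i hi
    rw [mem_range] at hi
    rw [V0_lt m lam hi, Complex.conj_ofReal]
    push_cast; ring
  have hmid : ∀ i, ¬ i < m - 1 → i ≤ m →
      V0 m lam i * (starRingEnd ℂ) (V0 m lam i)
        = ((ur ((m - 1 : ℕ) : ℤ) lam ^ 2 / 4 : ℝ) : ℂ) := by
    intro i h1 h2
    rw [V0_mid m lam h1 h2 hm]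
    rw [_root_.map_div₀, Complex.conj_ofReal, _root_.map_ofNat]
    push_cast; ring
  have htail : ∀ j ∈ range (m - 1),
      V0 m lam (m + 1 + j) * (starRingEnd ℂ) (V0 m lam (m + 1 + j)) = 0 := by
    intro j hj
    rw [V0_tail m lam (by omega) (by omega)]
    ring
  rw [Finset.sum_congr rfl hr1, Finset.sum_congr rfl htail,
    hmid (m - 1) (by omega) (by omega), hmid m (by omega) (by omega)]
  push_cast
  simp only [Finset.sum_const_zero, add_zero]
  ring

theorem compute_NH (m : ℕ) (hm : 2 ≤ m) (lam : ℝ) :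
    ip (vh m lam) (vh m lam)
      = ((2 * (∑ j ∈ range (m - 1), ur (j : ℕ) lam ^ 2)
          + ur ((m - 1 : ℕ) : ℤ) lam ^ 2 : ℝ) : ℂ) := by
  rw [ip_vh_vh, sum_split m hm]
  have hkey : ∀ i : ℕ, (-Complex.I) ^ i * ((starRingEnd ℂ) (-Complex.I)) ^ i = 1 := by
    intro i
    rw [_root_.map_neg, Complex.conj_I, neg_neg, ← mul_pow, neg_mul, Complex.I_mul_I, neg_neg, one_pow]
  have hr1 : ∀ i ∈ range (m - 1),
      VH m lam i * (starRingEnd ℂ) (VH m lam i) = ((ur i lam ^ 2 : ℝ) : ℂ) := by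
    intro i hi
    rw [mem_range] at hi
    rw [VH_lt m lam hi, _root_.map_mul, _root_.map_pow, Complex.conj_ofReal]
    calc (-Complex.I) ^ i * ((ur i lam : ℝ) : ℂ) *
          (((starRingEnd ℂ) (-Complex.I)) ^ i * ((ur i lam : ℝ) : ℂ))
        = ((-Complex.I) ^ i * ((starRingEnd ℂ) (-Complex.I)) ^ i) * ((ur i lam : ℝ) : ℂ) ^ 2 := by
          ring
      _ = ((ur i lam ^ 2 : ℝ) : ℂ) := by rw [hkey]; push_cast; ring
  have hmid : ∀ i, ¬ i < m - 1 → i ≤ m →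
      VH m lam i * (starRingEnd ℂ) (VH m lam i)
        = ((ur ((m - 1 : ℕ) : ℤ) lam ^ 2 / 2 : ℝ) : ℂ) := by
    intro i h1 h2
    rw [VH_mid m lam h1 h2 hm, _root_.map_mul, _root_.map_pow, _root_.map_mul, Complex.conj_ofReal, _root_.map_div₀,
      _root_.map_add, _root_.map_one, Complex.conj_I, _root_.map_ofNat]
    calc (-Complex.I) ^ i * ((1 + Complex.I) / 2 * ((ur ((m - 1:ℕ):ℤ) lam : ℝ) : ℂ)) *
          (((starRingEnd ℂ) (-Complex.I)) ^ i *
            ((1 + -Complex.I) / 2 * ((ur ((m - 1:ℕ):ℤ) lam : ℝ) : ℂ)))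
        = ((-Complex.I) ^ i * ((starRingEnd ℂ) (-Complex.I)) ^ i) *
            (((1 + Complex.I) * (1 + -Complex.I) / 4) * ((ur ((m - 1:ℕ):ℤ) lam : ℝ) : ℂ) ^ 2) := by
          ring
      _ = ((ur ((m - 1 : ℕ) : ℤ) lam ^ 2 / 2 : ℝ) : ℂ) := by
          rw [hkey]
          have : (1 + Complex.I) * (1 + -Complex.I) = 2 := by
            have := Complex.I_mul_I
            ring_nf
            rw [Complex.I_sq]
            ring
          rw [this]
          push_cast; ring
  have htail : ∀ j ∈ range (m - 1),
      VH m lam (m + 1 + j) * (starRingEnd ℂ) (VH m lam (m + 1 + j))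
        = ((ur ((m - 2 - j : ℕ) : ℤ) lam : ℝ) : ℂ) ^ 2 := by
    intro j hj
    rw [mem_range] at hj
    rw [VH_tail m lam hj hm, _root_.map_mul, _root_.map_pow, Complex.conj_ofReal]
    calc (-Complex.I) ^ (m+1+j) * ((ur ((m - 2 - j:ℕ):ℤ) lam : ℝ) : ℂ) *
          (((starRingEnd ℂ) (-Complex.I)) ^ (m+1+j) * ((ur ((m - 2 - j:ℕ):ℤ) lam : ℝ) : ℂ))
        = ((-Complex.I) ^ (m+1+j) * ((starRingEnd ℂ) (-Complex.I)) ^ (m+1+j)) *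
            ((ur ((m - 2 - j:ℕ):ℤ) lam : ℝ) : ℂ) ^ 2 := by ring
      _ = ((ur ((m - 2 - j:ℕ):ℤ) lam : ℝ) : ℂ) ^ 2 := by rw [hkey]; ring
  rw [Finset.sum_congr rfl hr1, Finset.sum_congr rfl htail,
    hmid (m - 1) (by omega) (by omega), hmid m (by omega) (by omega), refl_sum m lam]
  push_cast
  ring

theorem compute_NQ (m : ℕ) (hm : 2 ≤ m) (lam : ℝ) :
    ip (vq m lam) (vq m lam)
      = (((2 * (∑ j ∈ range (m - 1), ur (j : ℕ) lam ^ 2)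
          + ur ((m - 1 : ℕ) : ℤ) lam ^ 2) / (1 + cc) : ℝ) : ℂ) := by
  rw [ip_vq_vq, sum_split m hm]
  have hkey : ∀ i : ℕ, (Complex.exp (-(Real.pi / 4 : ℝ) * Complex.I)) ^ i *
      ((starRingEnd ℂ) (Complex.exp (-(Real.pi / 4 : ℝ) * Complex.I))) ^ i = 1 := by
    intro i
    rw [conj_eta, ← mul_pow, eta_eq, mul_comm, om_mul_conj, one_pow]
  have hr1 : ∀ i ∈ range (m - 1),
      VQ m lam i * (starRingEnd ℂ) (VQ m lam i) = ((ur i lam ^ 2 : ℝ) : ℂ) := by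
    intro i hi
    rw [mem_range] at hi
    rw [VQ_lt m lam hi, _root_.map_mul, _root_.map_pow, Complex.conj_ofReal]
    calc Complex.exp (-(Real.pi / 4 : ℝ) * Complex.I) ^ i * ((ur i lam : ℝ) : ℂ) *
          (((starRingEnd ℂ) (Complex.exp (-(Real.pi / 4 : ℝ) * Complex.I))) ^ i *
            ((ur i lam : ℝ) : ℂ))
        = (Complex.exp (-(Real.pi / 4 : ℝ) * Complex.I) ^ i *
            ((starRingEnd ℂ) (Complex.exp (-(Real.pi / 4 : ℝ) * Complex.I))) ^ i) *
            ((ur i lam : ℝ) : ℂ) ^ 2 := by ring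
      _ = ((ur i lam ^ 2 : ℝ) : ℂ) := by rw [hkey]; push_cast; ring
  have hmid : ∀ i, ¬ i < m - 1 → i ≤ m →
      VQ m lam i * (starRingEnd ℂ) (VQ m lam i)
        = ((ur ((m - 1 : ℕ) : ℤ) lam ^ 2 / (2 + 2 * cc) : ℝ) : ℂ) := by
    intro i h1 h2
    rw [VQ_mid m lam h1 h2 hm, _root_.map_mul, _root_.map_pow, _root_.map_mul, Complex.conj_ofReal, _root_.map_div₀,
      _root_.map_one, _root_.map_add, _root_.map_one, conj_eta, eta_eq]
    have hp : ((starRingEnd ℂ) om) ^ i * om ^ i = 1 := by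
      rw [← mul_pow, mul_comm, om_mul_conj, one_pow]
    calc ((starRingEnd ℂ) om) ^ i *
          (1 / (1 + (starRingEnd ℂ) om) * ((ur ((m - 1:ℕ):ℤ) lam : ℝ) : ℂ)) *
          (om ^ i * (1 / (1 + om) * ((ur ((m - 1:ℕ):ℤ) lam : ℝ) : ℂ)))
        = (((starRingEnd ℂ) om) ^ i * om ^ i) *
            ((1 / (1 + (starRingEnd ℂ) om)) * (1 / (1 + om)) *
              ((ur ((m - 1:ℕ):ℤ) lam : ℝ) : ℂ) ^ 2) := by ring
      _ = ((ur ((m - 1 : ℕ) : ℤ) lam ^ 2 / (2 + 2 * cc) : ℝ) : ℂ) := by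
          rw [hp, div_mul_div_comm, one_mul, hsum_scalar, one_mul]
          push_cast
          ring
  have htail : ∀ j ∈ range (m - 1),
      VQ m lam (m + 1 + j) * (starRingEnd ℂ) (VQ m lam (m + 1 + j))
        = (((2 - 2 * cc) / (2 + 2 * cc) : ℝ) : ℂ) * ((ur ((m - 2 - j:ℕ):ℤ) lam : ℝ) : ℂ) ^ 2 := by
    intro j hj
    rw [mem_range] at hj
    rw [VQ_tail m lam hj hm, _root_.map_mul, _root_.map_pow, _root_.map_mul, Complex.conj_ofReal, _root_.map_div₀,
      _root_.map_sub, _root_.map_one, _root_.map_add, _root_.map_one, conj_eta, eta_eq]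
    have hp : ((starRingEnd ℂ) om) ^ (m + 1 + j) * om ^ (m + 1 + j) = 1 := by
      rw [← mul_pow, mul_comm, om_mul_conj, one_pow]
    calc ((starRingEnd ℂ) om) ^ (m+1+j) *
          ((1 - om) / (1 + (starRingEnd ℂ) om) * ((ur ((m - 2 - j:ℕ):ℤ) lam : ℝ) : ℂ)) *
          (om ^ (m+1+j) * ((1 - (starRingEnd ℂ) om) / (1 + om) *
            ((ur ((m - 2 - j:ℕ):ℤ) lam : ℝ) : ℂ)))
        = (((starRingEnd ℂ) om) ^ (m+1+j) * om ^ (m+1+j)) *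
            (((1 - om) / (1 + (starRingEnd ℂ) om)) * ((1 - (starRingEnd ℂ) om) / (1 + om)) *
              ((ur ((m - 2 - j:ℕ):ℤ) lam : ℝ) : ℂ) ^ 2) := by ring
      _ = (((2 - 2 * cc) / (2 + 2 * cc) : ℝ) : ℂ) *
            ((ur ((m - 2 - j:ℕ):ℤ) lam : ℝ) : ℂ) ^ 2 := by
          rw [hp, div_mul_div_comm, hq2_scalar, hsum_scalar, one_mul]
          push_cast
          ring
  rw [Finset.sum_congr rfl hr1, Finset.sum_congr rfl htail,
    hmid (m - 1) (by omega) (by omega), hmid m (by omega) (by omega),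
    ← Finset.mul_sum, refl_sum m lam]
  push_cast
  have h1 : (1:ℂ) + ((cc:ℝ):ℂ) ≠ 0 := by
    intro h
    have := congrArg Complex.re h
    simp at this
    nlinarith [cc_pos]
  have h2 : (2:ℂ) + 2 * ((cc:ℝ):ℂ) ≠ 0 := by
    intro h
    have := congrArg Complex.re h
    simp at this
    nlinarith [cc_pos]
  field_simp
  ring

lemma normSq_om : Complex.normSq om = 1 := by
  simp [Complex.normSq_apply, om]
  nlinarith [cc_sq]

lemma abs_om : ‖om‖ = 1 := by
  rw [Complex.norm_def, normSq_om, Real.sqrt_one]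

set_option maxHeartbeats 1000000 in
theorem stmt19 (m : ℕ) (hm : 2 ≤ m) (lam : ℝ)
    (hroot : ur (m : ℤ) lam - ur ((m : ℤ) - 1) lam - ur ((m : ℤ) - 2) lam = 0)
    (hmax : ∀ x : ℝ,
        ur (m : ℤ) x - ur ((m : ℤ) - 1) x - ur ((m : ℤ) - 2) x = 0 → x ≤ lam) :
    ‖ip (v0 m lam) (vq m lam)‖ / (nrm (v0 m lam) * nrm (vq m lam))
      > ‖ip (vq m lam) (vh m lam)‖ / (nrm (vq m lam) * nrm (vh m lam)) := by
  have hlam : 1 ≤ lam := lam_ge_one m hm lam hroot hmax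
  set t : ℝ := ur ((m - 1 : ℕ) : ℤ) lam ^ 2 with ht
  set S : ℝ := ∑ j ∈ range (m - 1), ur (j : ℕ) lam ^ 2 with hS
  set Z : ℂ := Zc m lam with hZdef
  set p : ℂ := om ^ (m - 1) with hpdef
  have hpconj : (starRingEnd ℂ) p * p = 1 := by rw [hpdef]; exact conj_om_pow (m - 1)
  set W : ℂ := (starRingEnd ℂ) p * Z with hWdef
  have htpos : 0 < t := by
    have := ur_ge_one hlam (m - 1)
    nlinarith
  have hSpos : 0 < S := by
    rw [hS]
    apply Finset.sum_pos
    · intro j _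
      have := ur_ge_one hlam j
      nlinarith
    · exact ⟨0, by simp; omega⟩
  have hccpos := cc_pos
  -- inner products
  have hA : ip (v0 m lam) (vq m lam) = p * (W + (t : ℂ) / 2) := by
    rw [compute_A m hm lam, hWdef, ← hZdef, ← hpdef]
    push_cast [ht]
    linear_combination (-(Z : ℂ)) * hpconj
  have hB : ip (vq m lam) (vh m lam)
      = p * (W + ((cc : ℝ) : ℂ) * (t : ℂ) + (2 * ((cc : ℝ) : ℂ) - 1) * (starRingEnd ℂ) W) := by
    rw [compute_B m hm lam, ← hZdef, ← hpdef,
      show om ^ (2 * m - 2) = p * p from by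
        rw [hpdef, ← pow_add, show m - 1 + (m - 1) = 2 * m - 2 by omega],
      hWdef, _root_.map_mul (starRingEnd ℂ) ((starRingEnd ℂ) p) Z, Complex.conj_conj]
    push_cast [ht]
    linear_combination (-(Z : ℂ)) * hpconj
  have habs_p : ‖p‖ = 1 := by rw [hpdef, norm_pow, abs_om, one_pow]
  -- W.im < 0
  have hWeq : W = ∑ j ∈ range (m - 1),
      (starRingEnd ℂ) (om ^ (m - 1 - j)) * ((ur (j : ℕ) lam : ℝ) : ℂ) ^ 2 := by
    rw [hWdef, hZdef, Zc, Finset.mul_sum]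
    apply Finset.sum_congr rfl
    intro j hj
    rw [mem_range] at hj
    rw [hpdef, show om ^ (m - 1) = om ^ (m - 1 - j) * om ^ j from by
      rw [← pow_add, show m - 1 - j + j = m - 1 by omega],
      _root_.map_mul (starRingEnd ℂ) (om ^ (m - 1 - j)) (om ^ j)]
    have := conj_om_pow j
    calc (starRingEnd ℂ) (om ^ (m - 1 - j)) * (starRingEnd ℂ) (om ^ j)
          * (om ^ j * ((ur (j : ℕ) lam : ℝ) : ℂ) ^ 2)
        = (starRingEnd ℂ) (om ^ (m - 1 - j)) * ((starRingEnd ℂ) (om ^ j) * om ^ j)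
          * ((ur (j : ℕ) lam : ℝ) : ℂ) ^ 2 := by ring
      _ = _ := by rw [this]; ring
  have hWim : W.im = -(∑ j ∈ range (m - 1), (om ^ (m - 1 - j)).im * ur (j : ℕ) lam ^ 2) := by
    rw [hWeq, Complex.im_sum, ← Finset.sum_neg_distrib]
    apply Finset.sum_congr rfl
    intro j _
    rw [← Complex.ofReal_pow]
    simp only [Complex.mul_im, Complex.ofReal_im, Complex.ofReal_re, Complex.conj_im,
      Complex.conj_re, mul_zero, zero_add]
    ring
  have hrefl2 : ∑ j ∈ range (m - 1), (om ^ (m - 1 - j)).im * ur (j : ℕ) lam ^ 2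
      = ∑ j ∈ range (m - 1), (om ^ (j + 1)).im * ur ((m - 2 - j : ℕ) : ℕ) lam ^ 2 := by
    rw [← Finset.sum_range_reflect
      (fun j => (om ^ (j + 1)).im * ur ((m - 2 - j : ℕ) : ℕ) lam ^ 2) (m - 1)]
    apply Finset.sum_congr rfl
    intro j hj
    rw [mem_range] at hj
    rw [show m - 1 - 1 - j + 1 = m - 1 - j by omega, show m - 2 - (m - 1 - 1 - j) = j by omega]
  have hT : 0 < ∑ j ∈ range (m - 1), (om ^ (j + 1)).im * ur ((m - 2 - j : ℕ) : ℕ) lam ^ 2 := by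
    rw [abel_sum (fun r => (om ^ r).im) (fun j => ur ((m - 2 - j : ℕ) : ℕ) lam ^ 2) (m - 1)]
    have hPs : ∀ k : ℕ, 0 ≤ ∑ r ∈ range k, (om ^ (r + 1)).im := by
      intro k
      have := Ps_nonneg k
      rwa [Complex.im_sum] at this
    have hdiff : ∀ j : ℕ, 0 ≤ ur ((m - 2 - j : ℕ) : ℕ) lam ^ 2 - ur ((m - 2 - (j+1) : ℕ) : ℕ) lam ^ 2 := by
      intro j
      have h1 := ur_mono hlam (show m - 2 - (j+1) ≤ m - 2 - j by omega)
      have h2 := ur_ge_one hlam (m - 2 - (j+1))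
      nlinarith
    have hterms : ∀ j ∈ range (m - 1), 0 ≤ (∑ r ∈ range (j + 1), (om ^ (r + 1)).im) *
        (ur ((m - 2 - j : ℕ) : ℕ) lam ^ 2 - ur ((m - 2 - (j+1) : ℕ) : ℕ) lam ^ 2) := by
      intro j _
      exact mul_nonneg (hPs (j + 1)) (hdiff j)
    have htail0 : 0 ≤ (∑ r ∈ range (m - 1), (om ^ (r + 1)).im) *
        ur ((m - 2 - (m - 1) : ℕ) : ℕ) lam ^ 2 := by
      apply mul_nonneg (hPs (m - 1))
      positivity
    rcases eq_or_lt_of_le hm with hm2 | hm3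
    · -- m = 2
      have hm2' : m = 2 := hm2.symm
      subst hm2'
      simp only [show (2:ℕ) - 1 = 1 from rfl]
      rw [Finset.sum_range_one]
      have hps1 : (∑ r ∈ range (0 + 1), (om ^ (r + 1)).im) = cc := by
        rw [Finset.sum_range_one, pow_one]
        simp [om]
      norm_num [hps1] at *
      simp only [Finset.sum_range_one, zero_add, pow_one, Nat.sub_self, Nat.sub_zero, Nat.zero_sub,
        sub_self, mul_zero, hps1, Nat.cast_zero, ur_zero, mul_one]
      nlinarith [cc_pos, ur_ge_one hlam 0]
    · -- m ≥ 3
      have h30 : 0 < (∑ r ∈ range (0 + 1), (om ^ (r + 1)).im) *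
          (ur ((m - 2 - 0 : ℕ) : ℕ) lam ^ 2 - ur ((m - 2 - (0+1) : ℕ) : ℕ) lam ^ 2) := by
        have hps1 : (∑ r ∈ range (0 + 1), (om ^ (r + 1)).im) = cc := by
          rw [Finset.sum_range_one, pow_one]
          simp [om]
        rw [hps1]
        apply mul_pos cc_pos
        have h1 := ur_succ_ge hlam (m - 3)
        rw [show (m - 3 + 1 : ℕ) = m - 2 by omega] at h1
        have h2 := ur_ge_one hlam (m - 3)
        rw [show (m - 2 - 0 : ℕ) = m - 2 by omega, show (m - 2 - (0+1) : ℕ) = m - 3 by omega]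
        nlinarith
      have hge : (∑ r ∈ range (0 + 1), (om ^ (r + 1)).im) *
          (ur ((m - 2 - 0 : ℕ) : ℕ) lam ^ 2 - ur ((m - 2 - (0+1) : ℕ) : ℕ) lam ^ 2)
          ≤ ∑ j ∈ range (m - 1), (∑ r ∈ range (j + 1), (om ^ (r + 1)).im) *
            (ur ((m - 2 - j : ℕ) : ℕ) lam ^ 2 - ur ((m - 2 - (j+1) : ℕ) : ℕ) lam ^ 2) := by
        apply Finset.single_le_sum hterms
        rw [mem_range]; omega
      linarith
  have hyneg : W.im < 0 := by
    rw [hWim, hrefl2]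
    linarith [hT]
  -- squared inequality
  have hkey : ‖W + ((cc : ℝ) : ℂ) * (t : ℂ) + (2 * ((cc : ℝ) : ℂ) - 1) * (starRingEnd ℂ) W‖ ^ 2
      < 2 * ‖W + (t : ℂ) / 2‖ ^ 2 := by
    rw [Complex.sq_norm, Complex.sq_norm, Complex.normSq_apply, Complex.normSq_apply]
    simp only [Complex.add_re, Complex.add_im, Complex.mul_re, Complex.mul_im,
      Complex.ofReal_re, Complex.ofReal_im, Complex.conj_re, Complex.conj_im,
      Complex.sub_re, Complex.sub_im, Complex.one_re, Complex.one_im,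
      Complex.re_ofNat, Complex.im_ofNat, Complex.div_ofNat_re, Complex.div_ofNat_im,
      mul_zero, zero_mul, sub_zero, zero_sub, add_zero, zero_add, mul_one, zero_div]
    have hzero : (W.re + t / 2) ^ 2 * (cc ^ 2 - 1 / 2) = 0 := by rw [cc_sq]; ring
    have hzero2 : W.im ^ 2 * (cc ^ 2 - 1 / 2) = 0 := by rw [cc_sq]; ring
    have hy2 : 0 < W.im ^ 2 := by nlinarith [hyneg]
    have hpos : 0 < (8 * cc - 4) * W.im ^ 2 := by
      apply mul_pos _ hy2
      nlinarith [cc_half]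
    nlinarith [hzero, hzero2, hpos]
  -- norms
  have hn0 : nrm (v0 m lam) = Real.sqrt (S + t / 2) := by
    rw [nrm, compute_N0 m hm lam, Complex.ofReal_re]
  have hnq : nrm (vq m lam) = Real.sqrt ((2 * S + t) / (1 + cc)) := by
    rw [nrm, compute_NQ m hm lam, Complex.ofReal_re]
  have hnh : nrm (vh m lam) = Real.sqrt (2 * S + t) := by
    rw [nrm, compute_NH m hm lam, Complex.ofReal_re]
  have hq_pos : 0 < Real.sqrt ((2 * S + t) / (1 + cc)) := by
    apply Real.sqrt_pos.mpr
    apply div_pos (by linarith) (by linarith)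
  have h0_pos : 0 < Real.sqrt (S + t / 2) := Real.sqrt_pos.mpr (by linarith)
  have hh_eq : Real.sqrt (2 * S + t) = Real.sqrt 2 * Real.sqrt (S + t / 2) := by
    rw [← Real.sqrt_mul (by norm_num : (0:ℝ) ≤ 2)]
    ring_nf
  -- |B| < √2 |A|
  have hBA : ‖ip (vq m lam) (vh m lam)‖
      < Real.sqrt 2 * ‖ip (v0 m lam) (vq m lam)‖ := by
    rw [hA, hB, norm_mul p (W + ((cc : ℝ) : ℂ) * (t : ℂ)
        + (2 * ((cc : ℝ) : ℂ) - 1) * (starRingEnd ℂ) W),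
      norm_mul p (W + (t : ℂ) / 2), habs_p, one_mul, one_mul]
    apply lt_of_pow_lt_pow_left₀ 2 (by positivity)
    rw [mul_pow, Real.sq_sqrt (by norm_num : (0:ℝ) ≤ 2)]
    exact hkey
  rw [gt_iff_lt, hn0, hnq, hnh, hh_eq, div_lt_div_iff₀ (by positivity) (by positivity)]
  calc ‖ip (vq m lam) (vh m lam)‖ * (Real.sqrt (S + t / 2) * Real.sqrt ((2 * S + t) / (1 + cc)))
      = (Real.sqrt (S + t / 2) * Real.sqrt ((2 * S + t) / (1 + cc))) *
          ‖ip (vq m lam) (vh m lam)‖ := by ring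
    _ < (Real.sqrt (S + t / 2) * Real.sqrt ((2 * S + t) / (1 + cc))) *
          (Real.sqrt 2 * ‖ip (v0 m lam) (vq m lam)‖) := by
        exact mul_lt_mul_of_pos_left hBA (by positivity)
    _ = ‖ip (v0 m lam) (vq m lam)‖ *
          (Real.sqrt ((2 * S + t) / (1 + cc)) * (Real.sqrt 2 * Real.sqrt (S + t / 2))) := by ring
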